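/- Let p₀ : Fin m → ℝ be nonzero with nonnegative entries, let C : Matrix (Fin m) (Fin n) ℝ, and let λ ≥ 0. Then the infimum over Π ∈ S(p₀) of trace(Cᵀ * Π) + (λ / ‖p₀‖₂) · Σ_{i ∈ Fin n} ‖Π_i‖₂ is less than or equal to the infimum over Π ∈ S(p₀) of trace(Cᵀ * Π) + λ · card(Πᵀ𝟙); i.e., the sum-of-norms relaxation is a lower bound for the cardinality-penalized optimal transport problem. -/

import Mathlib

/-!
Every column of a feasible `Π` lies entrywise between `0` and `p₀`, so its Euclidean norm is at
most `‖p₀‖₂`, and it vanishes when the column sum does. Hence `Σᵢ ‖Πᵢ‖₂ ≤ ‖p₀‖₂ · card(Πᵀ𝟙)`, so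
the relaxed objective lies pointwise below the penalized one; both contain the transport cost,
which is bounded below on `S(p₀)`, so the infima compare the same way. When `p₀ = 0`, Lean's
`lam / 0 = 0` makes the relaxed penalty vanish and the inequality is immediate.
-/

open Matrix

/-- The feasible set `S(p₀)`: entrywise-nonnegative matrices with row sums `p₀`. -/
def feasibleSet {m n : ℕ} (p₀ : Fin m → ℝ) : Set (Matrix (Fin m) (Fin n) ℝ) :=
  {P | (∀ j i, 0 ≤ P j i) ∧ ∀ j, ∑ i, P j i = p₀ j}

theorem sInf_le_sInf_of_forall_le {α β : Type*} [ConditionallyCompleteLattice α] {s : Set β}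
    {f g : β → α} (hf : BddBelow (f '' s)) (hfg : ∀ x ∈ s, f x ≤ g x) :
    sInf {v | ∃ x ∈ s, v = f x} ≤ sInf {v | ∃ x ∈ s, v = g x} := by
  have himage (h : β → α) : {v | ∃ x ∈ s, v = h x} = h '' s := by
    ext v; simp only [Set.mem_ofPred_eq, Set.mem_image, eq_comm]
  rw [himage, himage, sInf_image', sInf_image']
  exact ciInf_mono (by rwa [← Set.image_eq_range]) fun x => hfg x x.2

theorem Real.sqrt_sum_sq_le_sqrt_sum_sq {ι : Type*} (s : Finset ι) {x y : ι → ℝ}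
    (hx : ∀ i ∈ s, 0 ≤ x i) (hxy : ∀ i ∈ s, x i ≤ y i) :
    √(∑ i ∈ s, x i ^ 2) ≤ √(∑ i ∈ s, y i ^ 2) :=
  Real.sqrt_le_sqrt <| Finset.sum_le_sum fun i hi => pow_le_pow_left₀ (hx i hi) (hxy i hi) 2

theorem Real.sqrt_sum_sq_eq_zero_of_sum_eq_zero {ι : Type*} (s : Finset ι) {x : ι → ℝ}
    (hx : ∀ i ∈ s, 0 ≤ x i) (hsum : ∑ i ∈ s, x i = 0) : √(∑ i ∈ s, x i ^ 2) = 0 := by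
  have hzero := (Finset.sum_eq_zero_iff_of_nonneg hx).mp hsum
  rw [Finset.sum_eq_zero fun i hi => by rw [hzero i hi, sq, zero_mul], Real.sqrt_zero]

theorem div_mul_le_of_nonneg {a b : ℝ} (ha : 0 ≤ a) (hb : 0 ≤ b) : a / b * b ≤ a := by
  rcases hb.eq_or_lt with rfl | hb
  · simpa using ha
  · rw [div_mul_cancel₀ a hb.ne']

section feasibleSet

variable {m n : ℕ} {p₀ : Fin m → ℝ} {P : Matrix (Fin m) (Fin n) ℝ}

theorem le_of_mem_feasibleSet (hP : P ∈ feasibleSet p₀) (j : Fin m) (i : Fin n) :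
    P j i ≤ p₀ j :=
  hP.2 j ▸ Finset.single_le_sum (fun i' _ => hP.1 j i') (Finset.mem_univ i)

theorem sqrt_sum_sq_col_le_ite (hP : P ∈ feasibleSet p₀) (i : Fin n) :
    √(∑ j, P j i ^ 2) ≤ if ∑ j, P j i ≠ 0 then √(∑ j, p₀ j ^ 2) else 0 := by
  split_ifs with hcol
  · exact Real.sqrt_sum_sq_le_sqrt_sum_sq _ (fun j _ => hP.1 j i)
      fun j _ => le_of_mem_feasibleSet hP j i
  · exact (Real.sqrt_sum_sq_eq_zero_of_sum_eq_zero _ (fun j _ => hP.1 j i) (not_not.mp hcol)).le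

theorem sum_sqrt_sum_sq_col_le_card_mul (hP : P ∈ feasibleSet p₀) :
    ∑ i, √(∑ j, P j i ^ 2) ≤
      (Finset.univ.filter (fun i : Fin n => ∑ j, P j i ≠ 0)).card * √(∑ j, p₀ j ^ 2) := by
  calc ∑ i, √(∑ j, P j i ^ 2)
      ≤ ∑ i, if ∑ j, P j i ≠ 0 then √(∑ j, p₀ j ^ 2) else 0 :=
        Finset.sum_le_sum fun i _ => sqrt_sum_sq_col_le_ite hP i
    _ = _ := by rw [← Finset.sum_filter, Finset.sum_const, nsmul_eq_mul]

theorem sum_abs_mul_le_trace_transpose_mul (C : Matrix (Fin m) (Fin n) ℝ)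
    (hP : P ∈ feasibleSet p₀) : -∑ j, ∑ i, |C j i| * p₀ j ≤ trace (Cᵀ * P) := by
  have htrace : trace (Cᵀ * P) = ∑ j, ∑ i, C j i * P j i := by
    simp only [trace, diag, mul_apply, transpose_apply]
    exact Finset.sum_comm
  rw [htrace, ← Finset.sum_neg_distrib]
  refine Finset.sum_le_sum fun j _ => ?_
  rw [← Finset.sum_neg_distrib]
  refine Finset.sum_le_sum fun i _ => ?_
  calc -(|C j i| * p₀ j) ≤ -(|C j i| * P j i) :=
        neg_le_neg <| mul_le_mul_of_nonneg_left (le_of_mem_feasibleSet hP j i) (abs_nonneg _)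
    _ = -|C j i * P j i| := by rw [abs_mul, abs_of_nonneg (hP.1 j i)]
    _ ≤ C j i * P j i := neg_abs_le _

end feasibleSet

theorem stmt_15_general (m n : ℕ) (p₀ : Fin m → ℝ)
    (C : Matrix (Fin m) (Fin n) ℝ) (lam : ℝ) (hlam : 0 ≤ lam) :
    sInf {v : ℝ | ∃ P ∈ feasibleSet (n := n) p₀,
        v = Matrix.trace (Cᵀ * P) +
          (lam / Real.sqrt (∑ j, (p₀ j) ^ 2)) * ∑ i : Fin n, Real.sqrt (∑ j, (P j i) ^ 2)}
      ≤ sInf {v : ℝ | ∃ P ∈ feasibleSet (n := n) p₀,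
          v = Matrix.trace (Cᵀ * P) +
            lam * ((Finset.univ.filter (fun i : Fin n => ∑ j, P j i ≠ 0)).card : ℝ)} := by
  set N := √(∑ j, p₀ j ^ 2)
  have hN : 0 ≤ lam / N := div_nonneg hlam (Real.sqrt_nonneg _)
  refine sInf_le_sInf_of_forall_le ⟨-∑ j, ∑ i, |C j i| * p₀ j, ?_⟩ fun P hP => ?_
  · rintro _ ⟨P, hP, rfl⟩
    have hpen : 0 ≤ lam / N * ∑ i, √(∑ j, P j i ^ 2) :=
      mul_nonneg hN (Finset.sum_nonneg fun i _ => Real.sqrt_nonneg _)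
    linarith [sum_abs_mul_le_trace_transpose_mul C hP]
  · apply add_le_add_right
    calc lam / N * ∑ i, √(∑ j, P j i ^ 2)
        ≤ lam / N * ((Finset.univ.filter (fun i : Fin n => ∑ j, P j i ≠ 0)).card * N) :=
          mul_le_mul_of_nonneg_left (sum_sqrt_sum_sq_col_le_card_mul hP) hN
      _ = lam / N * N * (Finset.univ.filter (fun i : Fin n => ∑ j, P j i ≠ 0)).card := by ring
      _ ≤ lam * (Finset.univ.filter (fun i : Fin n => ∑ j, P j i ≠ 0)).card :=
          mul_le_mul_of_nonneg_right (div_mul_le_of_nonneg hlam (Real.sqrt_nonneg _))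
            (Nat.cast_nonneg _)

theorem stmt_15 (m n : ℕ) (p₀ : Fin m → ℝ) (hp₀ : ∀ j, 0 ≤ p₀ j) (hne : p₀ ≠ 0)
    (C : Matrix (Fin m) (Fin n) ℝ) (lam : ℝ) (hlam : 0 ≤ lam) :
    sInf {v : ℝ | ∃ P ∈ feasibleSet (n := n) p₀,
        v = Matrix.trace (Cᵀ * P) +
          (lam / Real.sqrt (∑ j, (p₀ j) ^ 2)) * ∑ i : Fin n, Real.sqrt (∑ j, (P j i) ^ 2)}
      ≤ sInf {v : ℝ | ∃ P ∈ feasibleSet (n := n) p₀,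
          v = Matrix.trace (Cᵀ * P) +
            lam * ((Finset.univ.filter (fun i : Fin n => ∑ j, P j i ≠ 0)).card : ℝ)} :=
  stmt_15_general m n p₀ C lam hlam
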